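/- There exists a universal constant c > 0 with the following property. Let ε > 0, let g_ε(x) = e^{−εx²}, let h_ε(x) = (4πε)^{−1/2} e^{−x²/(4ε)}, and for θ₀ ∈ L¹(ℝ) with ∫_ℝ (1 + |ξ|) |θ̂₀(ξ)| dξ < ∞ set θ₀^ε(x) = g_ε(x) · (h_ε * θ₀)(x). Then ∫_ℝ |ξ| |θ̂₀^ε(ξ)| dξ ≤ ∫_ℝ |ξ| |θ̂₀(ξ)| dξ + c √ε ∫_ℝ |θ̂₀(ξ)| dξ, i.e. ‖θ₀^ε‖_{Ȧ¹} ≤ ‖θ₀‖_{Ȧ¹} + c√ε ‖θ₀‖_{A⁰}. -/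

import Mathlib

open MeasureTheory

/-- The Fourier transform normalized as `f̂(ξ) = (2π)^{-1/2} ∫ f(x) e^{-ixξ} dx`. -/
noncomputable def fourierTrans (f : ℝ → ℂ) (ξ : ℝ) : ℂ :=
  (((2 * Real.pi) ^ (-(1 / 2 : ℝ)) : ℝ) : ℂ) *
    ∫ x : ℝ, f x * Complex.exp (-Complex.I * (x : ℂ) * (ξ : ℂ))

/-- The Gaussian `g_ε(x) = e^{−εx²}`. -/
noncomputable def gaussMult (ε x : ℝ) : ℝ := Real.exp (-ε * x ^ 2)

/-- The heat kernel at time `ε`: `h_ε(x) = (4πε)^{−1/2} e^{−x²/(4ε)}`. -/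
noncomputable def heatKer (ε x : ℝ) : ℝ :=
  (4 * Real.pi * ε) ^ (-(1 / 2 : ℝ)) * Real.exp (-x ^ 2 / (4 * ε))

/-- The regularization `θ₀^ε(x) = g_ε(x) · (h_ε * θ₀)(x)`. -/
noncomputable def regData (ε : ℝ) (θ₀ : ℝ → ℂ) (x : ℝ) : ℂ :=
  ((gaussMult ε x : ℝ) : ℂ) * ∫ y : ℝ, ((heatKer ε (x - y) : ℝ) : ℂ) * θ₀ y

/-!
On the Fourier side the regularization reads `θ̂₀^ε = h_ε * (g_ε θ̂₀)`: the heat semigroup becomes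
multiplication by `e^{-εξ²} = g_ε(ξ)`, and multiplication by `g_ε` becomes convolution with
`(2π)^{-1/2} ĝ_ε = h_ε`. Hence `|θ̂₀^ε| ≤ h_ε * |θ̂₀|`, and since `|ξ| ≤ |η| + |ξ - η|`, the first
moment of this convolution is at most `‖h_ε‖₁ ∫ |η| |θ̂₀| + (∫ |x| h_ε) ‖θ̂₀‖₁`, where `‖h_ε‖₁ = 1`
and `∫ |x| h_ε = 2 √(ε/π)`.
-/

open Real Complex
open scoped Convolution
open ContinuousLinearMap (lsmul)

theorem integral_abs_mul_exp_neg_mul_sq {b : ℝ} (hb : 0 < b) :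
    ∫ x : ℝ, |x| * rexp (-b * x ^ 2) = b⁻¹ := by
  have half : ∫ x in Set.Ioi (0 : ℝ), x * rexp (-b * x ^ 2) = (2 * b)⁻¹ := by
    apply ofReal_injective
    rw [← integral_complex_ofReal]
    push_cast
    exact integral_mul_cexp_neg_mul_sq (by simpa using hb)
  have := integral_comp_abs (f := fun x => x * rexp (-b * x ^ 2))
  simp only [sq_abs] at this
  rw [this, half]
  field_simp

theorem integrable_abs_mul_exp_neg_mul_sq {b : ℝ} (hb : 0 < b) :
    Integrable fun x : ℝ => |x| * rexp (-b * x ^ 2) := by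
  simpa [abs_mul] using (integrable_mul_exp_neg_mul_sq hb).abs

theorem heatKer_nonneg {ε : ℝ} (hε : 0 ≤ ε) (x : ℝ) : 0 ≤ heatKer ε x := by
  unfold heatKer
  positivity

theorem heatKer_eq_mul_exp (ε : ℝ) :
    heatKer ε = fun x => (4 * π * ε) ^ (-(1 / 2 : ℝ)) * rexp (-(4 * ε)⁻¹ * x ^ 2) := by
  ext x
  rw [heatKer, neg_div, div_eq_inv_mul (x ^ 2), neg_mul]

theorem integrable_heatKer {ε : ℝ} (hε : 0 < ε) : Integrable (heatKer ε) := by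
  rw [heatKer_eq_mul_exp]
  exact (integrable_exp_neg_mul_sq (by positivity)).const_mul _

theorem integral_heatKer {ε : ℝ} (hε : 0 < ε) : ∫ x, heatKer ε x = 1 := by
  rw [heatKer_eq_mul_exp, integral_const_mul, integral_gaussian, div_inv_eq_mul,
    rpow_neg (by positivity : (0 : ℝ) ≤ 4 * π * ε),
    ← sqrt_eq_rpow, ← mul_assoc, mul_comm π]
  exact inv_mul_cancel₀ (by positivity)

theorem abs_mul_heatKer_eq_mul_exp (ε : ℝ) :
    (fun x => |x| * heatKer ε x) =
      fun x => (4 * π * ε) ^ (-(1 / 2 : ℝ)) * (|x| * rexp (-(4 * ε)⁻¹ * x ^ 2)) := by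
  ext x
  rw [heatKer_eq_mul_exp, mul_left_comm]

theorem integrable_abs_mul_heatKer {ε : ℝ} (hε : 0 < ε) :
    Integrable fun x => |x| * heatKer ε x := by
  rw [abs_mul_heatKer_eq_mul_exp]
  exact (integrable_abs_mul_exp_neg_mul_sq (by positivity)).const_mul _

theorem integral_abs_mul_heatKer {ε : ℝ} (hε : 0 < ε) :
    ∫ x, |x| * heatKer ε x = 2 / √π * √ε := by
  rw [abs_mul_heatKer_eq_mul_exp, integral_const_mul,
    integral_abs_mul_exp_neg_mul_sq (by positivity), inv_inv,
    rpow_neg (by positivity : (0 : ℝ) ≤ 4 * π * ε), ← sqrt_eq_rpow]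
  have : √(4 * π * ε) = 2 * √π * √ε := by
    rw [sqrt_mul' _ hε.le, sqrt_mul' _ pi_pos.le, show (4 : ℝ) = 2 ^ 2 by norm_num,
      sqrt_sq two_pos.le]
  rw [this]
  field_simp
  rw [sq_sqrt hε.le]
  ring

theorem integral_cexp_quadratic_eq {b c₁ c₂ d₁ d₂ : ℂ} (hb : b.re < 0)
    (h : c₁ ^ 2 - 4 * b * d₁ = c₂ ^ 2 - 4 * b * d₂) :
    ∫ x : ℝ, cexp (b * x ^ 2 + c₁ * x + d₁) = ∫ x : ℝ, cexp (b * x ^ 2 + c₂ * x + d₂) := by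
  have hb0 : b ≠ 0 := by rintro rfl; simp at hb
  rw [integral_cexp_quadratic hb, integral_cexp_quadratic hb]
  congr 2
  field_simp
  linear_combination -h

theorem gaussMult_mul_heatKer_mul_cexp_eq (ε x y ξ : ℝ) :
    (gaussMult ε x : ℂ) * (heatKer ε (x - y) : ℂ) * cexp (-I * x * ξ) =
      ((4 * π * ε) ^ (-(1 / 2 : ℝ)) : ℝ) *
        cexp (-((ε : ℂ) + (4 * (ε : ℂ))⁻¹) * x ^ 2 + (y / (2 * ε) - I * ξ) * x +
          -y ^ 2 / (4 * ε)) := by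
  simp only [gaussMult, heatKer]
  push_cast
  rw [show ∀ a k b c : ℂ, a * (k * b) * c = k * (a * b * c) from fun _ _ _ _ => by ring,
    ← Complex.exp_add, ← Complex.exp_add]
  ring_nf

theorem heatKer_sub_comm (ε x y : ℝ) : heatKer ε (x - y) = heatKer ε (y - x) := by
  rw [heatKer, heatKer, ← neg_sub, neg_sq]

/-- Both sides are Gaussian integrals with the same quadratic coefficient `-(ε + 1/(4ε))` and the
same discriminant. -/
theorem integral_gaussMult_mul_heatKer_mul_cexp {ε : ℝ} (hε : 0 < ε) (y ξ : ℝ) :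
    ∫ x : ℝ, (gaussMult ε x : ℂ) * (heatKer ε (x - y) : ℂ) * cexp (-I * x * ξ) =
      ∫ η : ℝ, (heatKer ε (ξ - η) : ℂ) * (gaussMult ε η : ℂ) * cexp (-I * y * η) := by
  have hε' : (ε : ℂ) ≠ 0 := ofReal_ne_zero.mpr hε.ne'
  simp_rw [heatKer_sub_comm ε ξ, mul_comm (heatKer ε _ : ℂ), mul_right_comm (-I) (y : ℂ),
    gaussMult_mul_heatKer_mul_cexp_eq, integral_const_mul]
  congr 1
  apply integral_cexp_quadratic_eq
  · norm_cast
    exact neg_neg_of_pos (by positivity)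
  · linear_combination ((ξ : ℂ) ^ 2 - y ^ 2) * I_sq + ((ξ : ℂ) ^ 2 - y ^ 2) * mul_inv_cancel₀ hε'

theorem norm_cexp_neg_I_mul (x ξ : ℝ) : ‖cexp (-I * x * ξ)‖ = 1 := by
  rw [norm_exp]
  simp

theorem continuous_gaussMult (ε : ℝ) : Continuous (gaussMult ε) := by
  unfold gaussMult
  fun_prop

theorem norm_gaussMult_le_one {ε : ℝ} (hε : 0 ≤ ε) (x : ℝ) : ‖(gaussMult ε x : ℂ)‖ ≤ 1 := by
  unfold gaussMult
  rw [norm_real, Real.norm_of_nonneg (Real.exp_pos _).le, Real.exp_le_one_iff]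
  nlinarith [sq_nonneg x]

theorem integral_mul_convolution_mul_cexp {m K θ : ℝ → ℂ} {C : ℝ} (hm : AEStronglyMeasurable m)
    (hmC : ∀ x, ‖m x‖ ≤ C) (hK : Integrable K) (hθ : Integrable θ) (ξ : ℝ) :
    ∫ x, (m x * ∫ y, K (x - y) * θ y) * cexp (-I * x * ξ) =
      ∫ y, θ y * ∫ x, m x * K (x - y) * cexp (-I * x * ξ) := by
  have hint : Integrable (fun p : ℝ × ℝ => m p.1 * K (p.1 - p.2) * θ p.2 * cexp (-I * p.1 * ξ))
      (volume.prod volume) := by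
    have hbdd : ∀ p : ℝ × ℝ, ‖m p.1 * cexp (-I * p.1 * ξ)‖ ≤ C := fun p => by
      rw [norm_mul, norm_cexp_neg_I_mul, mul_one]; exact hmC p.1
    have hphase : Continuous fun p : ℝ × ℝ => cexp (-I * p.1 * ξ) := by fun_prop
    refine ((hθ.convolution_integrand (ContinuousLinearMap.mul ℝ ℂ) hK).bdd_mul
      (hm.comp_fst.mul hphase.aestronglyMeasurable) (ae_of_all _ hbdd)).congr
      (ae_of_all _ fun p => ?_)
    simp only [Pi.mul_apply, ContinuousLinearMap.mul_apply']
    ring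
  calc ∫ x, (m x * ∫ y, K (x - y) * θ y) * cexp (-I * x * ξ)
      = ∫ x, ∫ y, m x * K (x - y) * θ y * cexp (-I * x * ξ) := by
        congr 1 with x
        rw [← integral_const_mul, ← integral_mul_const]
        congr 1 with y
        ring
    _ = ∫ y, ∫ x, m x * K (x - y) * θ y * cexp (-I * x * ξ) := integral_integral_swap hint
    _ = ∫ y, θ y * ∫ x, m x * K (x - y) * cexp (-I * x * ξ) := by
        congr 1 with y
        rw [← integral_const_mul]
        congr 1 with x
        ring

theorem integral_mul_integral_mul_cexp_comm {θ w : ℝ → ℂ} (hθ : Integrable θ) (hw : Integrable w) :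
    ∫ y, θ y * ∫ η, w η * cexp (-I * y * η) = ∫ η, w η * ∫ y, θ y * cexp (-I * y * η) := by
  have hint : Integrable (fun p : ℝ × ℝ => θ p.1 * (w p.2 * cexp (-I * p.1 * p.2)))
      (volume.prod volume) := by
    refine ((hθ.mul_prod hw).mul_bdd (by fun_prop : Continuous fun p : ℝ × ℝ =>
      cexp (-I * p.1 * p.2)).aestronglyMeasurable
      (ae_of_all _ fun p => (norm_cexp_neg_I_mul p.1 p.2).le)).congr (ae_of_all _ fun p => ?_)
    ring
  simp_rw [← integral_const_mul]
  rw [integral_integral_swap hint]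
  congr 1 with η
  congr 1 with y
  ring

theorem fourierTrans_regData {ε : ℝ} (hε : 0 < ε) {θ : ℝ → ℂ} (hθ : Integrable θ) (ξ : ℝ) :
    fourierTrans (regData ε θ) ξ =
      ∫ η, (heatKer ε (ξ - η) : ℂ) * gaussMult ε η * fourierTrans θ η := by
  have hw : Integrable fun η => (heatKer ε (ξ - η) : ℂ) * gaussMult ε η :=
    ((integrable_heatKer hε).comp_sub_left ξ).ofReal.mul_bdd
      (continuous_ofReal.comp (continuous_gaussMult ε)).aestronglyMeasurable
      (ae_of_all _ (norm_gaussMult_le_one hε.le))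
  simp only [fourierTrans, regData]
  rw [integral_mul_convolution_mul_cexp (m := fun x => (gaussMult ε x : ℂ))
    (K := fun u => (heatKer ε u : ℂ))
    (continuous_ofReal.comp (continuous_gaussMult ε)).aestronglyMeasurable
    (norm_gaussMult_le_one hε.le) (integrable_heatKer hε).ofReal hθ]
  simp_rw [integral_gaussMult_mul_heatKer_mul_cexp hε]
  rw [integral_mul_integral_mul_cexp_comm hθ hw, ← integral_const_mul]
  congr 1 with η
  ring

theorem norm_fourierTrans_regData_le {ε : ℝ} (hε : 0 < ε) {θ : ℝ → ℂ} (hθ : Integrable θ) {ξ : ℝ}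
    (hξ : ConvolutionExistsAt (fun η => ‖fourierTrans θ η‖) (heatKer ε) ξ (lsmul ℝ ℝ)) :
    ‖fourierTrans (regData ε θ) ξ‖ ≤ ((fun η => ‖fourierTrans θ η‖) ⋆ heatKer ε) ξ := by
  rw [fourierTrans_regData hε hθ, convolution_lsmul]
  refine (norm_integral_le_integral_norm _).trans
    (integral_mono_of_nonneg (ae_of_all _ fun η => norm_nonneg _) hξ (ae_of_all _ fun η => ?_))
  dsimp only
  rw [norm_mul, norm_mul, norm_real, Real.norm_of_nonneg (heatKer_nonneg hε.le _), smul_eq_mul,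
    mul_comm]
  exact mul_le_mul_of_nonneg_left (mul_le_of_le_one_right (heatKer_nonneg hε.le _)
    (norm_gaussMult_le_one hε.le η)) (norm_nonneg _)

section Moments

variable {φ K : ℝ → ℝ}

theorem abs_mul_convolution_le (hφ : 0 ≤ φ) (hK : 0 ≤ K) {ξ : ℝ}
    (h₁ : ConvolutionExistsAt (fun x => |x| * φ x) K ξ (lsmul ℝ ℝ))
    (h₂ : ConvolutionExistsAt φ (fun x => |x| * K x) ξ (lsmul ℝ ℝ)) :
    |ξ| * (φ ⋆ K) ξ ≤ ((fun x => |x| * φ x) ⋆ K) ξ + (φ ⋆ fun x => |x| * K x) ξ := by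
  have i₁ : Integrable fun η => |η| * φ η * K (ξ - η) := by
    simpa only [ContinuousLinearMap.lsmul_apply, smul_eq_mul] using h₁.integrable
  have i₂ : Integrable fun η => φ η * (|ξ - η| * K (ξ - η)) := by
    simpa only [ContinuousLinearMap.lsmul_apply, smul_eq_mul] using h₂.integrable
  simp only [convolution_lsmul, smul_eq_mul]
  rw [← integral_const_mul, ← integral_add i₁ i₂]
  refine integral_mono_of_nonneg (ae_of_all _ fun η => ?_) (i₁.add i₂) (ae_of_all _ fun η => ?_)
  · exact mul_nonneg (abs_nonneg ξ) (mul_nonneg (hφ η) (hK (ξ - η)))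
  · have htri : |ξ| ≤ |η| + |ξ - η| := by simpa using abs_add_le η (ξ - η)
    have := mul_le_mul_of_nonneg_right htri (mul_nonneg (hφ η) (hK (ξ - η)))
    linarith

theorem integral_le_of_le_abs_mul_convolution {f : ℝ → ℝ} (hf₀ : 0 ≤ f)
    (hf : ∀ᵐ ξ, f ξ ≤ |ξ| * (φ ⋆ K) ξ) (hφ₀ : 0 ≤ φ) (hK₀ : 0 ≤ K) (hφ : Integrable φ)
    (hφ₁ : Integrable fun x => |x| * φ x) (hK : Integrable K)
    (hK₁ : Integrable fun x => |x| * K x) :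
    ∫ ξ, f ξ ≤ (∫ x, |x| * φ x) * (∫ x, K x) + (∫ x, φ x) * ∫ x, |x| * K x := by
  have hA := hφ₁.integrable_convolution (lsmul ℝ ℝ) hK
  have hB := hφ.integrable_convolution (lsmul ℝ ℝ) hK₁
  calc ∫ ξ, f ξ ≤ ∫ ξ, (((fun x => |x| * φ x) ⋆ K) ξ + (φ ⋆ fun x => |x| * K x) ξ) := by
        refine integral_mono_of_nonneg (ae_of_all _ hf₀) (hA.add hB) ?_
        filter_upwards [hf, hφ₁.ae_convolution_exists (lsmul ℝ ℝ) hK,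
          hφ.ae_convolution_exists (lsmul ℝ ℝ) hK₁] with ξ hξ h₁ h₂
        exact hξ.trans (abs_mul_convolution_le hφ₀ hK₀ h₁ h₂)
    _ = _ := by
        rw [integral_add hA hB, integral_convolution _ hφ₁ hK, integral_convolution _ hφ hK₁]
        rfl

end Moments

theorem MeasureTheory.Integrable.mul_of_abs_le_one_add_abs {φ a : ℝ → ℝ} (ha : Continuous a)
    (hle : ∀ x, |a x| ≤ 1 + |x|) (h : Integrable fun x => (1 + |x|) * φ x) :
    Integrable fun x => a x * φ x := by
  have hpos : ∀ x : ℝ, 0 < 1 + |x| := fun x => by positivity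
  refine (h.bdd_mul (f := fun x => a x / (1 + |x|)) (c := 1)
    (ha.div (by fun_prop) fun x => (hpos x).ne').aestronglyMeasurable
    (ae_of_all _ fun x => ?_)).congr (ae_of_all _ fun x => ?_)
  · rw [Real.norm_eq_abs, abs_div, abs_of_pos (hpos x)]
    exact (div_le_one (hpos x)).mpr (hle x)
  · field_simp [(hpos x).ne']

/-- There is a universal constant `c > 0` such that the regularization
`θ₀^ε = g_ε · (h_ε * θ₀)` of data `θ₀ ∈ L¹` with `(1 + |ξ|)θ̂₀ ∈ L¹` satisfies
`‖θ₀^ε‖_{Ȧ¹} ≤ ‖θ₀‖_{Ȧ¹} + c√ε ‖θ₀‖_{A⁰}`. -/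
theorem regularization_A1_bound :
    ∃ c > 0, ∀ (ε : ℝ), 0 < ε → ∀ (θ₀ : ℝ → ℂ), Integrable θ₀ →
      Integrable (fun ξ : ℝ => (1 + |ξ|) * ‖fourierTrans θ₀ ξ‖) →
      (∫ ξ : ℝ, |ξ| * ‖fourierTrans (regData ε θ₀) ξ‖) ≤
        (∫ ξ : ℝ, |ξ| * ‖fourierTrans θ₀ ξ‖) +
          c * Real.sqrt ε * ∫ ξ : ℝ, ‖fourierTrans θ₀ ξ‖ := by
  refine ⟨2 / √π, by positivity, fun ε hε θ₀ hθ₀ hA => ?_⟩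
  have hφ : Integrable fun ξ => ‖fourierTrans θ₀ ξ‖ := by
    simpa only [one_mul] using hA.mul_of_abs_le_one_add_abs (a := fun _ => 1) continuous_const
      (fun x => by simp)
  have hφ₁ := hA.mul_of_abs_le_one_add_abs continuous_abs (fun x => by simp)
  have hpointwise : ∀ᵐ ξ, |ξ| * ‖fourierTrans (regData ε θ₀) ξ‖ ≤
      |ξ| * ((fun η => ‖fourierTrans θ₀ η‖) ⋆ heatKer ε) ξ := by
    filter_upwards [hφ.ae_convolution_exists (lsmul ℝ ℝ) (integrable_heatKer hε)] with ξ hξ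
    exact mul_le_mul_of_nonneg_left (norm_fourierTrans_regData_le hε hθ₀ hξ) (abs_nonneg ξ)
  have hbound := integral_le_of_le_abs_mul_convolution (fun ξ => by positivity) hpointwise
    (fun _ => norm_nonneg _) (heatKer_nonneg hε.le) hφ hφ₁ (integrable_heatKer hε)
    (integrable_abs_mul_heatKer hε)
  rw [integral_heatKer hε, integral_abs_mul_heatKer hε, mul_one] at hbound
  linarith
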